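/- For every natural number n, the (n+1)-st Catalan number satisfies C_{n+1} = Σ_{k ≥ 0} C(n, 2k) · 2^(n−2k) · C_k, where C(n, 2k) is the binomial coefficient and C_k is the k-th Catalan number (Touchard's identity). -/
import Mathlib

open Finset

/-- Certificate function for the WZ-style telescoping proof of Touchard's identity. -/
def tch (n : ℕ) : ℕ → ℕ
  | 0 => 0
  | (j + 1) => (2 * j + 2).choose (j + 1) * n.choose (2 * j + 1) * 2 ^ (n - 2 * j)

lemma tch_aux (k m : ℕ) (hk : 1 ≤ k) :
    (2 * k + m + 3) * ((2 * k + m + 1).choose (2 * k) * 2 ^ (m + 1) * catalan k) +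
      (2 * k + 2).choose (k + 1) * (2 * k + m).choose (2 * k + 1) * 2 ^ m =
    2 * (2 * (2 * k + m) + 3) * ((2 * k + m).choose (2 * k) * 2 ^ m * catalan k) +
      (2 * k).choose k * (2 * k + m).choose (2 * k - 1) * 2 ^ (m + 2) := by
  apply Nat.eq_of_mul_eq_mul_left
    (show 0 < (k + 1) * (2 * k + 1) * (m + 1) by positivity)
  have h1 : (k + 1) * catalan k = (2 * k).choose k :=
    succ_mul_catalan_eq_centralBinom k
  have h2 : (k + 1) * (2 * k + 2).choose (k + 1) = 2 * (2 * k + 1) * (2 * k).choose k := by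
    have h := Nat.succ_mul_centralBinom_succ k
    simp only [Nat.centralBinom] at h
    rw [show 2 * (k + 1) = 2 * k + 2 from by omega] at h
    exact h
  have h3 : (2 * k + m).choose (2 * k + 1) * (2 * k + 1) = (2 * k + m).choose (2 * k) * m := by
    have h := Nat.choose_succ_right_eq (2 * k + m) (2 * k)
    rwa [show 2 * k + m - 2 * k = m from by omega] at h
  have h4 : (2 * k + m).choose (2 * k) * (2 * k) =
      (2 * k + m).choose (2 * k - 1) * (m + 1) := by
    have h := Nat.choose_succ_right_eq (2 * k + m) (2 * k - 1)
    rwa [show 2 * k - 1 + 1 = 2 * k from by omega,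
      show 2 * k + m - (2 * k - 1) = m + 1 from by omega] at h
  have h5 : (2 * k + m + 1).choose (2 * k) =
      (2 * k + m).choose (2 * k - 1) + (2 * k + m).choose (2 * k) := by
    have h := Nat.choose_succ_succ (2 * k + m) (2 * k - 1)
    simp only [Nat.succ_eq_add_one] at h
    rwa [show 2 * k - 1 + 1 = 2 * k from by omega] at h
  zify at h1 h2 h3 h4 h5 ⊢
  linear_combination
    (2:ℤ) * 2 ^ m * ((2:ℤ) * k + m + 3) * (k + 1) * (2 * k + 1) * (m + 1) * (catalan k) * h5 +
    (2:ℤ) ^ m * (2 * k + 1) * (m + 1) * ((2 * k + m).choose (2 * k + 1)) * h2 +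
    (2:ℤ) * 2 ^ m * (2 * k + 1) * (m + 1) * ((2 * k).choose k) * h3 +
    ((4:ℤ) * 2 ^ m * (k + 1) * (2 * k + 1) * ((2 * k).choose k) -
      (2:ℤ) * 2 ^ m * ((2:ℤ) * k + m + 3) * (2 * k + 1) * (k + 1) * (catalan k)) * h4 +
    (2:ℤ) * 2 ^ m * (2 * k + 1) * ((2 * k + m).choose (2 * k)) *
      ((((2:ℤ) * k + m + 3) * ((2:ℤ) * k + m + 1)) - (m + 1) * ((4:ℤ) * k + 2 * m + 3)) * h1

lemma tch_key (n k : ℕ) :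
    (n + 3) * ((n + 1).choose (2 * k) * 2 ^ (n + 1 - 2 * k) * catalan k) + tch n (k + 1) =
      2 * (2 * n + 3) * (n.choose (2 * k) * 2 ^ (n - 2 * k) * catalan k) + tch n k := by
  match k with
  | 0 =>
    simp only [tch, Nat.mul_zero, Nat.choose_zero_right, catalan_zero, Nat.sub_zero,
      Nat.choose_one_right, Nat.zero_mul, Nat.zero_add, Nat.mul_one, Nat.one_mul]
    norm_num [Nat.choose_one_right]
    rw [show n + 1 = n + 1 from rfl, pow_succ]
    ring
  | (j + 1) =>
    rcases le_or_gt (2 * (j + 1)) n with hle | hgt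
    · -- main case: 2(j+1) ≤ n
      obtain ⟨m, rfl⟩ : ∃ m, n = 2 * (j + 1) + m := ⟨n - 2 * (j + 1), by omega⟩
      simp only [tch]
      rw [show 2 * (j + 1) + m + 1 - 2 * (j + 1) = m + 1 from by omega,
        show 2 * (j + 1) + m - 2 * (j + 1) = m from by omega,
        show 2 * (j + 1) + m - 2 * j = m + 2 from by omega,
        show (2 * (j + 1) + 2 : ℕ) = 2 * (j + 1) + 2 from rfl,
        show (2 * j + 2 : ℕ) = 2 * (j + 1) from by omega,
        show (2 * j + 1 : ℕ) = 2 * (j + 1) - 1 from by omega]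
      exact tch_aux (j + 1) m (by omega)
    · rcases eq_or_lt_of_le (show n + 1 ≤ 2 * (j + 1) from hgt) with heq | hgt2
      · -- boundary case: 2(j+1) = n + 1
        obtain rfl : n = 2 * j + 1 := by omega
        simp only [tch]
        have z1 : (2 * j + 1 + 1).choose (2 * (j + 1)) = 1 := by
          rw [show 2 * j + 1 + 1 = 2 * (j + 1) from by omega]; exact Nat.choose_self _
        have z2 : (2 * j + 1).choose (2 * (j + 1) + 1) = 0 :=
          Nat.choose_eq_zero_of_lt (by omega)
        have z3 : (2 * j + 1).choose (2 * (j + 1)) = 0 :=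
          Nat.choose_eq_zero_of_lt (by omega)
        have z4 : (2 * j + 1).choose (2 * j + 1) = 1 := Nat.choose_self _
        rw [z1, z2, z3, z4, show 2 * j + 1 + 1 - 2 * (j + 1) = 0 from by omega,
          show 2 * j + 1 - 2 * j = 1 from by omega]
        have h1 : (j + 1 + 1) * catalan (j + 1) = (2 * j + 2).choose (j + 1) := by
          have h := succ_mul_catalan_eq_centralBinom (j + 1)
          rwa [show Nat.centralBinom (j + 1) = (2 * (j + 1)).choose (j + 1) from rfl,
            show 2 * (j + 1) = 2 * j + 2 from by omega] at h
        calc (2 * j + 1 + 3) * (1 * 2 ^ 0 * catalan (j + 1)) +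
              (2 * (j + 1) + 2).choose (j + 1 + 1) * 0 * 2 ^ (2 * j + 1 - 2 * (j + 1))
            = 2 * ((j + 1 + 1) * catalan (j + 1)) := by ring
          _ = 2 * (2 * (2 * j + 1) + 3) * (0 * 2 ^ (2 * j + 1 - 2 * (j + 1)) * catalan (j + 1)) +
              (2 * j + 2).choose (j + 1) * 1 * 2 ^ 1 := by rw [h1]; ring
      · -- vanishing case: 2(j+1) ≥ n + 2
        simp only [tch]
        have z1 : (n + 1).choose (2 * (j + 1)) = 0 := Nat.choose_eq_zero_of_lt (by omega)
        have z2 : n.choose (2 * (j + 1)) = 0 := Nat.choose_eq_zero_of_lt (by omega)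
        have z3 : n.choose (2 * (j + 1) + 1) = 0 := Nat.choose_eq_zero_of_lt (by omega)
        have z4 : n.choose (2 * j + 1) = 0 := Nat.choose_eq_zero_of_lt (by omega)
        rw [z1, z2, z3, z4]
        ring

lemma tch_rec (n : ℕ) :
    (n + 3) * ∑ k ∈ range (n + 2), (n + 1).choose (2 * k) * 2 ^ (n + 1 - 2 * k) * catalan k =
      2 * (2 * n + 3) * ∑ k ∈ range (n + 2), n.choose (2 * k) * 2 ^ (n - 2 * k) * catalan k := by
  have tele : ∑ k ∈ range (n + 2), tch n (k + 1) = ∑ k ∈ range (n + 2), tch n k := by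
    have h1 := Finset.sum_range_succ' (fun k => tch n k) (n + 2)
    have h2 := Finset.sum_range_succ (fun k => tch n k) (n + 2)
    have hz : tch n (n + 2) = 0 := by
      simp [tch, Nat.choose_eq_zero_of_lt (show n < 2 * (n + 1) + 1 from by omega)]
    have hz0 : tch n 0 = 0 := rfl
    rw [h2, hz, add_zero, hz0, add_zero] at h1
    exact h1.symm
  have key : ∑ k ∈ range (n + 2),
      ((n + 3) * ((n + 1).choose (2 * k) * 2 ^ (n + 1 - 2 * k) * catalan k) + tch n (k + 1)) =
      ∑ k ∈ range (n + 2),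
      (2 * (2 * n + 3) * (n.choose (2 * k) * 2 ^ (n - 2 * k) * catalan k) + tch n k) :=
    Finset.sum_congr rfl fun k _ => tch_key n k
  rw [Finset.sum_add_distrib, Finset.sum_add_distrib, tele, ← Finset.mul_sum,
    ← Finset.mul_sum] at key
  exact Nat.add_right_cancel key

lemma catalan_rec (n : ℕ) :
    (n + 3) * catalan (n + 2) = 2 * (2 * n + 3) * catalan (n + 1) := by
  apply Nat.eq_of_mul_eq_mul_left (show 0 < n + 2 from by omega)
  have c1 : (n + 3) * catalan (n + 2) = Nat.centralBinom (n + 2) :=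
    succ_mul_catalan_eq_centralBinom (n + 2)
  have c2 : (n + 2) * catalan (n + 1) = Nat.centralBinom (n + 1) :=
    succ_mul_catalan_eq_centralBinom (n + 1)
  have c3 := Nat.succ_mul_centralBinom_succ (n + 1)
  calc (n + 2) * ((n + 3) * catalan (n + 2)) = (n + 2) * Nat.centralBinom (n + 2) := by rw [c1]
    _ = 2 * (2 * (n + 1) + 1) * Nat.centralBinom (n + 1) := c3
    _ = 2 * (2 * n + 3) * ((n + 2) * catalan (n + 1)) := by rw [c2]; ring_nf
    _ = (n + 2) * (2 * (2 * n + 3) * catalan (n + 1)) := by ring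

theorem touchard (n : ℕ) :
    catalan (n + 1) =
      ∑ k ∈ Finset.range (n + 1), n.choose (2 * k) * 2 ^ (n - 2 * k) * catalan k := by
  induction n with
  | zero => simp [catalan_one]
  | succ n ih =>
    have hext : ∑ k ∈ range (n + 2), n.choose (2 * k) * 2 ^ (n - 2 * k) * catalan k =
        ∑ k ∈ range (n + 1), n.choose (2 * k) * 2 ^ (n - 2 * k) * catalan k := by
      rw [Finset.sum_range_succ, Nat.choose_eq_zero_of_lt (by omega)]
      simp
    have h := tch_rec n
    rw [hext, ← ih, ← catalan_rec n] at h
    exact (Nat.eq_of_mul_eq_mul_left (show 0 < n + 3 from by omega) h.symm)
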